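/- arXiv:2401.15240 — 4 statements merged into one kernel-verified Lean document; each statement's English description precedes it below -/
import Mathlib

section
/- For the sequence defined by α_t = (H+1)/(H+t) for t ≥ 1, and α_t^i = α_i · ∏_{j=i+1}^t (1 - α_j) for i ≤ t (with α_t^t = α_t), it holds for every i ≥ 1 that the infinite sum ∑_{t=i}^∞ α_t^i = 1 + 1/H. -/
/-- learning rate α_t = (H+1)/(H+t) -/
noncomputable def alphaRate (H t : ℕ) : ℝ := ((H : ℝ) + 1) / ((H : ℝ) + t)

/-- weight α_t^i = α_i · ∏_{j=i+1}^t (1 - α_j) -/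
noncomputable def alphaWeight (H i t : ℕ) : ℝ :=
  alphaRate H i * ∏ j ∈ Finset.Icc (i + 1) t, (1 - alphaRate H j)

/-- for every i ≥ 1, ∑_{t=i}^∞ α_t^i = 1 + 1/H. -/
theorem sum_alphaWeight_eq (H i : ℕ) (hH : 1 ≤ H) (hi : 1 ≤ i) :
    ∑' k : ℕ, alphaWeight H i (i + k) = 1 + 1 / (H : ℝ) := by
  have hHpos : (0:ℝ) < H := by exact_mod_cast hH
  have hH1 : (1:ℝ) ≤ H := by exact_mod_cast hH
  have hipos : (0:ℝ) < i := by exact_mod_cast hi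
  have hHi : (0:ℝ) < (H:ℝ) + i := by linarith
  set P : ℕ → ℝ := fun t => ∏ j ∈ Finset.Icc (i + 1) t, (1 - alphaRate H j) with hP
  set Q : ℕ → ℝ := fun t => (1 + 1/(H:ℝ)) * (((H:ℝ) + t)/((H:ℝ) + i)) * P t with hQ
  have hfac : ∀ j : ℕ, i + 1 ≤ j → 0 ≤ 1 - alphaRate H j := by
    intro j hj
    have hj1 : (1:ℝ) ≤ j := by exact_mod_cast Nat.one_le_of_lt (Nat.lt_of_lt_of_le (Nat.lt_succ_of_le hi) hj)
    have : alphaRate H j ≤ 1 := by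
      rw [alphaRate, div_le_one (by linarith)]
      linarith
    linarith
  have hP0 : ∀ t, 0 ≤ P t := by
    intro t
    apply Finset.prod_nonneg
    intro j hj
    exact hfac j (Finset.mem_Icc.mp hj).1
  have hPsucc : ∀ t, i ≤ t → P (t+1) = P t * (1 - alphaRate H (t+1)) := by
    intro t ht
    simp only [hP]
    rw [Finset.prod_Icc_succ_top (by omega : i + 1 ≤ t + 1)]
  have hQrec : ∀ t, i ≤ t → Q (t+1) = Q t * ((t:ℝ) / ((H:ℝ) + t)) := by
    intro t ht
    have hHt : (0:ℝ) < (H:ℝ) + t := by positivity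
    have hHt1 : (0:ℝ) < (H:ℝ) + t + 1 := by linarith
    simp only [hQ, hPsucc t ht, alphaRate]
    push_cast
    field_simp
    ring
  have hdiff : ∀ t, i ≤ t → alphaWeight H i t = Q t - Q (t+1) := by
    intro t ht
    rw [hQrec t ht]
    have hHt : (0:ℝ) < (H:ℝ) + t := by positivity
    have hW : alphaWeight H i t = alphaRate H i * P t := rfl
    rw [hW, alphaRate]
    simp only [hQ]
    generalize P t = p
    field_simp
    ring
  have hQi : Q i = 1 + 1/(H:ℝ) := by
    have hPi : P i = 1 := by
      simp [hP, Finset.Icc_eq_empty (by omega : ¬ i + 1 ≤ i)]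
    simp only [hQ, hPi, div_self (ne_of_gt hHi)]
    ring
  have hpartial : ∀ n, ∑ k ∈ Finset.range n, alphaWeight H i (i + k) = Q i - Q (i + n) := by
    intro n
    have heq : ∀ k ∈ Finset.range n, alphaWeight H i (i + k) = Q (i + k) - Q (i + k + 1) := by
      intro k _
      exact hdiff (i + k) (Nat.le_add_right _ _)
    rw [Finset.sum_congr rfl heq]
    exact Finset.sum_range_sub' (fun k => Q (i + k)) n
  have hQnonneg : ∀ t, 0 ≤ Q t := by
    intro t
    apply mul_nonneg (mul_nonneg (by positivity) (by positivity)) (hP0 t)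
  have hQbound : ∀ n, Q (i + n) ≤ (1 + 1/(H:ℝ)) * ((i:ℝ) / ((i:ℝ) + n)) := by
    intro n
    induction n with
    | zero => simp [hQi, div_self (ne_of_gt hipos)]
    | succ n ih =>
      have h1 : (0:ℝ) < (i:ℝ) + n := by positivity
      have hcast : ((i + n : ℕ) : ℝ) = (i:ℝ) + n := by push_cast; ring
      have hrec := hQrec (i + n) (Nat.le_add_right _ _)
      have hratio : ((i + n : ℕ):ℝ) / ((H:ℝ) + (i + n : ℕ)) ≤ ((i:ℝ) + n) / ((i:ℝ) + n + 1) := by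
        rw [hcast]
        apply div_le_div_of_nonneg_left (by positivity) (by positivity)
        linarith
      have hstep : Q (i + (n+1)) = Q (i + n) * (((i + n : ℕ):ℝ) / ((H:ℝ) + (i + n : ℕ))) := by
        rw [show i + (n+1) = (i + n) + 1 from rfl, hrec]
      rw [hstep]
      have h2 : (0:ℝ) ≤ ((i + n : ℕ):ℝ) / ((H:ℝ) + (i + n : ℕ)) := by positivity
      calc Q (i + n) * (((i + n : ℕ):ℝ) / ((H:ℝ) + (i + n : ℕ)))
          ≤ ((1 + 1/(H:ℝ)) * ((i:ℝ) / ((i:ℝ) + n))) * (((i:ℝ) + n) / ((i:ℝ) + n + 1)) := by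
            apply mul_le_mul ih hratio h2 (by positivity)
        _ = (1 + 1/(H:ℝ)) * ((i:ℝ) / ((i:ℝ) + ((n:ℝ)+1))) := by
            field_simp
            ring
        _ = (1 + 1/(H:ℝ)) * ((i:ℝ) / ((i:ℝ) + ((n+1 : ℕ):ℝ))) := by push_cast; ring
  have htend : Filter.Tendsto (fun n : ℕ => Q (i + n)) Filter.atTop (nhds 0) := by
    apply squeeze_zero (fun n => hQnonneg _) hQbound
    have h1 : Filter.Tendsto (fun n : ℕ => (i:ℝ) + n) Filter.atTop Filter.atTop :=
      Filter.tendsto_atTop_add_const_left _ _ tendsto_natCast_atTop_atTop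
    have h2 : Filter.Tendsto (fun n : ℕ => (1 + 1/(H:ℝ)) * ((i:ℝ) / ((i:ℝ) + n)))
        Filter.atTop (nhds ((1 + 1/(H:ℝ)) * 0)) := by
      apply Filter.Tendsto.const_mul
      exact Filter.Tendsto.div_atTop tendsto_const_nhds h1
    simpa using h2
  have hnonneg : ∀ k, 0 ≤ alphaWeight H i (i + k) := by
    intro k
    apply mul_nonneg _ (hP0 _)
    rw [alphaRate]
    positivity
  have hsum : HasSum (fun k : ℕ => alphaWeight H i (i + k)) (1 + 1/(H:ℝ)) := by
    rw [hasSum_iff_tendsto_nat_of_nonneg hnonneg]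
    have h0 : Filter.Tendsto (fun n : ℕ => Q i - Q (i + n)) Filter.atTop (nhds (Q i - 0)) :=
      Filter.Tendsto.sub tendsto_const_nhds htend
    rw [sub_zero, hQi] at h0
    exact Filter.Tendsto.congr (fun n => by rw [hpartial n, hQi]) h0
  exact hsum.tsum_eq
end

section
/- For the sequence α_t = (H+1)/(H+t) and weights α_T^t = α_t · ∏_{j=t+1}^T (1 - α_j), it holds for every T ≥ 1 that ∑_{t=1}^T α_T^t · α_t^2 ≤ 4H/T. -/
noncomputable def wWeight (H t : ℕ) : ℝ := alphaWeight H t t / alphaWeight H 1 t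

/-- ∑_{t=1}^T α_T^t · α_t² ≤ 4H/T for every T ≥ 1. -/
theorem sum_alphaWeight_sq_le (H T : ℕ) (hH : 1 ≤ H) (hT : 1 ≤ T) :
    ∑ t ∈ Finset.Icc 1 T, alphaWeight H t T * (alphaRate H t) ^ 2 ≤ 4 * (H : ℝ) / T := by
  have hH1 : (1 : ℝ) ≤ (H : ℝ) := by exact_mod_cast hH
  induction T, hT using Nat.le_induction with
  | base =>
    have h1 : alphaRate H 1 = 1 := by
      unfold alphaRate
      rw [div_eq_one_iff_eq] <;> push_cast <;> nlinarith
    simp [alphaWeight, h1]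
    linarith
  | succ T hT ih =>
    have hTr : (1 : ℝ) ≤ (T : ℝ) := by exact_mod_cast hT
    have hsplit : ∑ t ∈ Finset.Icc 1 (T + 1), alphaWeight H t (T + 1) * (alphaRate H t) ^ 2
        = (1 - alphaRate H (T + 1)) *
            (∑ t ∈ Finset.Icc 1 T, alphaWeight H t T * (alphaRate H t) ^ 2)
          + alphaRate H (T + 1) * (alphaRate H (T + 1)) ^ 2 := by
      rw [Finset.sum_Icc_succ_top (by omega : 1 ≤ T + 1)]
      have hlast : alphaWeight H (T + 1) (T + 1) = alphaRate H (T + 1) := by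
        unfold alphaWeight
        rw [Finset.Icc_eq_empty (by omega)]
        simp
      rw [hlast, Finset.mul_sum]
      congr 1
      apply Finset.sum_congr rfl
      intro t ht
      simp only [Finset.mem_Icc] at ht
      unfold alphaWeight
      rw [Finset.prod_Icc_succ_top (by omega : t + 1 ≤ T + 1)]
      ring
    rw [hsplit]
    set a := alphaRate H (T + 1) with ha
    have haval : a = ((H : ℝ) + 1) / ((H : ℝ) + (T + 1)) := by
      rw [ha]; unfold alphaRate; push_cast; ring_nf
    have hden : (0 : ℝ) < (H : ℝ) + (T + 1) := by linarith
    have ha01 : 0 ≤ a ∧ a ≤ 1 := by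
      constructor
      · rw [haval]; positivity
      · rw [haval, div_le_one hden]; linarith
    have hstep : (1 - a) * (4 * (H : ℝ) / T) + a * a ^ 2 ≤ 4 * (H : ℝ) / (T + 1) := by
      rw [haval]
      have hT0 : (0 : ℝ) < (T : ℝ) := by linarith
      have h1 : ((H:ℝ)+1)*((T:ℝ)+1) ≤ ((H:ℝ)+((T:ℝ)+1))^2 := by nlinarith [mul_pos hT0 (show (0:ℝ) < (H:ℝ) by linarith)]
      have h2 : ((H:ℝ)+1)^2 ≤ 4*(H:ℝ)^2 := by nlinarith [sq_nonneg ((H:ℝ)-1)]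
      have key : ((H:ℝ)+1)^3*((T:ℝ)+1) ≤ 4*(H:ℝ)^2*((H:ℝ)+((T:ℝ)+1))^2 := by
        nlinarith [mul_le_mul h2 h1 (by positivity) (by positivity)]
      have final := mul_le_mul_of_nonneg_left key (mul_pos hden hT0).le
      field_simp
      have final' := mul_le_mul_of_nonneg_left key hT0.le
      nlinarith [final, final']
    have hmono : (1 - a) * (∑ t ∈ Finset.Icc 1 T, alphaWeight H t T * (alphaRate H t) ^ 2)
        ≤ (1 - a) * (4 * (H : ℝ) / T) := by
      apply mul_le_mul_of_nonneg_left ih (by linarith [ha01.2])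
    calc (1 - a) * (∑ t ∈ Finset.Icc 1 T, alphaWeight H t T * (alphaRate H t) ^ 2) + a * a ^ 2
        ≤ (1 - a) * (4 * (H : ℝ) / T) + a * a ^ 2 := by linarith
      _ ≤ 4 * (H : ℝ) / ((T : ℕ) + 1 : ℕ) := by push_cast; exact hstep
end

section
/- Let {β_t}_{t≥1} be a non-increasing sequence of nonnegative reals, and define Δ_h^t for h ∈ [H+1] and t ≥ 1 by Δ_{H+1}^t = 0 for all t and Δ_h^t = ∑_{i=1}^t α_t^i Δ_{h+1}^i + β_t. Then Δ_h^{t+1} ≤ Δ_h^t for all t ≥ 1 and all h ∈ [H+1]. -/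
lemma alphaRate_nonneg (H t : ℕ) : 0 ≤ alphaRate H t := by
  unfold alphaRate; positivity

lemma alphaRate_le_one (H t : ℕ) (ht : 1 ≤ t) : alphaRate H t ≤ 1 := by
  unfold alphaRate
  have h1 : (1:ℝ) ≤ (t:ℝ) := by exact_mod_cast ht
  have h2 : (0:ℝ) ≤ (H:ℝ) := Nat.cast_nonneg H
  rw [div_le_one (by linarith)]
  linarith

lemma alphaWeight_nonneg (H i t : ℕ) : 0 ≤ alphaWeight H i t := by
  unfold alphaWeight
  apply mul_nonneg (alphaRate_nonneg H i)
  apply Finset.prod_nonneg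
  intro j hj
  have hj1 : 1 ≤ j := by
    have := (Finset.mem_Icc.1 hj).1; omega
  have := alphaRate_le_one H j hj1
  linarith

lemma alphaWeight_step (H i t : ℕ) (h : i ≤ t) :
    alphaWeight H i (t + 1) = (1 - alphaRate H (t + 1)) * alphaWeight H i t := by
  unfold alphaWeight
  rw [Finset.prod_Icc_succ_top (by omega : i + 1 ≤ t + 1)]
  ring

lemma alphaWeight_diag (H t : ℕ) : alphaWeight H t t = alphaRate H t := by
  unfold alphaWeight
  rw [Finset.Icc_eq_empty (by omega), Finset.prod_empty, mul_one]

lemma alphaWeight_sum (H : ℕ) : ∀ t, 1 ≤ t →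
    ∑ i ∈ Finset.Icc 1 t, alphaWeight H i t = 1 := by
  intro t ht
  induction t, ht using Nat.le_induction with
  | base =>
      simp [alphaWeight_diag, alphaRate]
      positivity
  | succ t ht ih =>
      rw [Finset.sum_Icc_succ_top (by omega : 1 ≤ t + 1), alphaWeight_diag]
      have : ∀ i ∈ Finset.Icc 1 t, alphaWeight H i (t + 1)
          = (1 - alphaRate H (t + 1)) * alphaWeight H i t := by
        intro i hi
        exact alphaWeight_step H i t (Finset.mem_Icc.1 hi).2
      rw [Finset.sum_congr rfl this, ← Finset.mul_sum, ih]
      ring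

/-- monotonicity of the recursively defined Δ_h^t with a
    non-increasing nonnegative sequence β_t. -/
theorem Delta_antitone (H : ℕ) (hH : 1 ≤ H)
    (β : ℕ → ℝ) (hβ0 : ∀ t, 0 ≤ β t) (hβ : ∀ t, β (t + 1) ≤ β t)
    (Δ : ℕ → ℕ → ℝ)
    (hTop : ∀ t, Δ (H + 1) t = 0)
    (hRec : ∀ h ∈ Finset.Icc 1 H, ∀ t, 1 ≤ t →
      Δ h t = ∑ i ∈ Finset.Icc 1 t, alphaWeight H i t * Δ (h + 1) i + β t) :
    ∀ h ∈ Finset.Icc 1 (H + 1), ∀ t, 1 ≤ t → Δ h (t + 1) ≤ Δ h t := by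
  have key : ∀ d h, h + d = H + 1 → 1 ≤ h → ∀ t, 1 ≤ t → Δ h (t + 1) ≤ Δ h t := by
    intro d
    induction d with
    | zero =>
        intro h hh h1 t ht
        have : h = H + 1 := by omega
        rw [this, hTop, hTop]
    | succ d ih =>
        intro h hh h1 t ht
        have hhle : h ≤ H := by omega
        have hstep : ∀ t', 1 ≤ t' → Δ (h + 1) (t' + 1) ≤ Δ (h + 1) t' := by
          intro t' ht'
          by_cases hcase : h + 1 = H + 1
          · rw [hcase, hTop, hTop]
          · exact ih (h + 1) (by omega) (by omega) t' ht'
        have mono : ∀ a, 1 ≤ a → ∀ b, a ≤ b → Δ (h + 1) b ≤ Δ (h + 1) a := by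
          intro a ha b hb
          induction b, hb using Nat.le_induction with
          | base => exact le_refl _
          | succ b hb ihb => exact le_trans (hstep b (le_trans ha hb)) ihb
        have hmem : h ∈ Finset.Icc 1 H := Finset.mem_Icc.2 ⟨by omega, hhle⟩
        have e2 := hRec h hmem t ht
        have e1 := hRec h hmem (t + 1) (by omega)
        set a := alphaRate H (t + 1) with ha_def
        set S := ∑ i ∈ Finset.Icc 1 t, alphaWeight H i t * Δ (h + 1) i with hS
        have e1' : Δ h (t + 1) = (1 - a) * S + a * Δ (h + 1) (t + 1) + β (t + 1) := by
          rw [e1, Finset.sum_Icc_succ_top (by omega : 1 ≤ t + 1), alphaWeight_diag]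
          have : ∀ i ∈ Finset.Icc 1 t, alphaWeight H i (t + 1) * Δ (h + 1) i
              = (1 - a) * (alphaWeight H i t * Δ (h + 1) i) := by
            intro i hi
            rw [alphaWeight_step H i t (Finset.mem_Icc.1 hi).2]; ring
          rw [Finset.sum_congr rfl this, ← Finset.mul_sum, ← hS]
        have hDS : Δ (h + 1) (t + 1) ≤ S := by
          calc Δ (h + 1) (t + 1)
              = ∑ i ∈ Finset.Icc 1 t, alphaWeight H i t * Δ (h + 1) (t + 1) := by
                rw [← Finset.sum_mul, alphaWeight_sum H t ht, one_mul]
            _ ≤ S := by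
                apply Finset.sum_le_sum
                intro i hi
                obtain ⟨hi1, hi2⟩ := Finset.mem_Icc.1 hi
                exact mul_le_mul_of_nonneg_left
                  (mono i hi1 (t + 1) (by omega)) (alphaWeight_nonneg H i t)
        have ha0 : 0 ≤ a := alphaRate_nonneg H (t + 1)
        have hb := hβ t
        nlinarith [mul_nonneg ha0 (sub_nonneg.2 hDS)]
  intro h hmem t ht
  have hh := Finset.mem_Icc.1 hmem
  exact key (H + 1 - h) h (by omega) hh.1 t ht
end

section
/- Let M, M' be row-stochastic d×d matrices with all entries of M strictly positive, and suppose ∑_{a=1}^d max_{a'} |1 - M'[a,a']/M[a,a']| ≤ 1/2. Let x be a stationary distribution of M (x^T M = x^T as a left eigenvector formulation, or M x = x in the paper's column convention) and x' a stationary distribution of M'. Then ‖x - x'‖_1² ≤ 64 d · ∑_{a=1}^d ∑_{a'=1}^d ((M[a,a'] - M'[a,a'])/M[a,a'])². -/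
set_option maxHeartbeats 1000000
open Finset

namespace StatStab
open scoped Classical

variable {d : ℕ}

def reaches (h : Fin d → Fin d) (b c : Fin d) : Prop := ∃ k, h^[k] b = c

def IsTree (a : Fin d) (f : Fin d → Fin d) : Prop := f a = a ∧ ∀ b, reaches f b a

noncomputable def treeSet (a : Fin d) : Finset (Fin d → Fin d) :=
  univ.filter (IsTree a)

noncomputable def RSet (a' : Fin d) : Finset (Fin d → Fin d) :=
  univ.filter (fun h => ∀ b, reaches h b a')

noncomputable def w (M : Fin d → Fin d → ℝ) (a : Fin d) : ℝ :=
  ∑ f ∈ treeSet a, ∏ b ∈ univ.erase a, M b (f b)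

lemma mem_treeSet {a : Fin d} {f : Fin d → Fin d} : f ∈ treeSet a ↔ IsTree a f := by
  simp [treeSet]

lemma mem_RSet {a' : Fin d} {h : Fin d → Fin d} : h ∈ RSet a' ↔ ∀ b, reaches h b a' := by
  simp [RSet]

/-- if two functions agree off `c`, reachability of `c` is the same. -/
lemma reaches_congr {f g : Fin d → Fin d} {c : Fin d} (hfg : ∀ b, b ≠ c → f b = g b)
    {b : Fin d} (hr : reaches f b c) : reaches g b c := by
  obtain ⟨k, hk⟩ := hr

  induction k generalizing b with
  | zero => exact ⟨0, hk⟩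
  | succ k ih =>
    by_cases hb : b = c
    · exact ⟨0, hb⟩
    · rw [Function.iterate_succ_apply] at hk
      obtain ⟨m, hm⟩ := ih hk
      exact ⟨m + 1, by rw [Function.iterate_succ_apply, ← hfg b hb]; exact hm⟩

lemma reaches_trans {h : Fin d → Fin d} {a b c : Fin d} (h1 : reaches h a b)
    (h2 : reaches h b c) : reaches h a c := by
  obtain ⟨k, hk⟩ := h1; obtain ⟨m, hm⟩ := h2
  exact ⟨m + k, by rw [Function.iterate_add_apply, hk, hm]⟩


/-- Lemma A: tree weights times row sum equals the R-sum. -/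
lemma lemA (M : Fin d → Fin d → ℝ) (a' : Fin d) :
    w M a' * (∑ c, M a' c) = ∑ h ∈ RSet a', ∏ b, M b (h b) := by
  rw [w, Finset.sum_mul_sum, ← Finset.sum_product']
  refine Finset.sum_bij' (fun p _ => Function.update p.1 a' p.2)
    (fun h _ => (Function.update h a' a', h a')) ?_ ?_ ?_ ?_ ?_
  · rintro ⟨f, c⟩ hp
    simp only [Finset.mem_product, mem_treeSet] at hp
    obtain ⟨⟨hfa, hfr⟩, -⟩ := hp
    rw [mem_RSet]
    intro b
    exact reaches_congr (fun b hb => (Function.update_of_ne hb _ _).symm) (hfr b)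
  · rintro h hh
    rw [mem_RSet] at hh
    simp only [Finset.mem_product, mem_treeSet, Finset.mem_univ, and_true]
    refine ⟨Function.update_self _ _ _, fun b => ?_⟩
    exact reaches_congr (fun b hb => (Function.update_of_ne hb _ _).symm) (hh b)
  · rintro ⟨f, c⟩ hp
    simp only [Finset.mem_product, mem_treeSet] at hp
    obtain ⟨⟨hfa, -⟩, -⟩ := hp
    have h1 : Function.update (Function.update f a' c) a' a' = f := by
      rw [Function.update_idem, Function.update_eq_self_iff, hfa]
    simp only [h1, Function.update_self]
  · rintro h hh
    dsimp only
    rw [Function.update_idem, Function.update_eq_self]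
  · rintro ⟨f, c⟩ hp
    simp only [Finset.mem_product, mem_treeSet] at hp
    obtain ⟨⟨hfa, -⟩, -⟩ := hp
    dsimp only
    rw [← Finset.mul_prod_erase univ _ (Finset.mem_univ a'), Function.update_self]
    rw [mul_comm]
    congr 1
    refine Finset.prod_congr rfl (fun b hb => ?_)
    rw [Function.update_of_ne (Finset.mem_erase.mp hb).1]

lemma ex_of_reaches {h : Fin d → Fin d} {a' : Fin d} (hh : ∀ b, reaches h b a') :
    ∃ k, h^[k+1] a' = a' := by
  obtain ⟨k, hk⟩ := hh (h a')
  exact ⟨k, by rw [Function.iterate_succ_apply]; exact hk⟩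

noncomputable def anchor (a' : Fin d) (h : Fin d → Fin d) (ex : ∃ k, h^[k+1] a' = a') :
    Fin d := h^[Nat.find ex] a'

lemma anchor_image {a' : Fin d} {h : Fin d → Fin d} (ex : ∃ k, h^[k+1] a' = a') :
    h (anchor a' h ex) = a' := by
  have hfs := Nat.find_spec ex
  rwa [Function.iterate_succ_apply'] at hfs

lemma reaches_anchor {a' : Fin d} {h : Fin d → Fin d} (hh : ∀ b, reaches h b a')
    (ex : ∃ k, h^[k+1] a' = a') (b : Fin d) : reaches h b (anchor a' h ex) :=
  reaches_trans (hh b) ⟨Nat.find ex, rfl⟩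

/-- key injectivity fact: the anchor of `update f a a'` recovers `a` when `f` is an `a`-tree. -/
lemma anchor_update {f : Fin d → Fin d} {a a' : Fin d} (hf : IsTree a f)
    (ex : ∃ k, (Function.update f a a')^[k+1] a' = a') :
    anchor a' (Function.update f a a') ex = a := by
  obtain ⟨hfa, hfr⟩ := hf
  set h := Function.update f a a' with hdef
  have hex : ∃ k, f^[k] a' = a := hfr a'
  set t := Nat.find hex with htdef
  have ht : f^[t] a' = a := Nat.find_spec hex
  have htmin : ∀ j, j < t → f^[j] a' ≠ a := fun j hj => Nat.find_min hex hj
  have step1 : ∀ j, j ≤ t → h^[j] a' = f^[j] a' := by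
    intro j
    induction j with
    | zero => intro _; rfl
    | succ j ih =>
      intro hj
      have hjlt : j < t := Nat.lt_of_succ_le hj
      rw [Function.iterate_succ_apply', Function.iterate_succ_apply', ih (le_of_lt hjlt)]
      exact Function.update_of_ne (htmin j hjlt) _ _
  have hPt : h^[t+1] a' = a' := by
    rw [Function.iterate_succ_apply', step1 t le_rfl, ht, hdef]
    exact Function.update_self _ _ _
  have hPmin : ∀ k, k < t → ¬ (h^[k+1] a' = a') := by
    intro k hk hcontra
    have hk1 : k + 1 ≤ t := Nat.succ_le_of_lt hk
    have hf1 : f^[k+1] a' = a' := by rw [← step1 (k+1) hk1]; exact hcontra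
    have hper : f^[t % (k+1)] a' = a := by
      have heq : f^[t] a' = f^[t % (k+1)] a' := by
        conv_lhs => rw [← Nat.mod_add_div t (k+1)]
        rw [Function.iterate_add_apply, Function.iterate_mul]
        congr 1
        exact Function.IsFixedPt.iterate hf1 (t/(k+1))
      rw [← heq]; exact ht
    exact htmin _ (lt_of_lt_of_le (Nat.mod_lt t (Nat.succ_pos k)) hk1) hper
  have hfind : Nat.find ex = t := by
    have h1 : Nat.find ex ≤ t := Nat.find_le hPt
    have h2 : ¬ Nat.find ex < t := fun hlt => hPmin _ hlt (Nat.find_spec ex)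
    exact le_antisymm h1 (not_lt.mp h2)
  rw [anchor, hfind, step1 t le_rfl, ht]

lemma roundtrip {f : Fin d → Fin d} {a a' : Fin d} (htree : IsTree a f)
    (ex : ∃ k, (Function.update f a a')^[k+1] a' = a') :
    (⟨anchor a' (Function.update f a a') ex,
      Function.update (Function.update f a a')
        (anchor a' (Function.update f a a') ex)
        (anchor a' (Function.update f a a') ex)⟩ : Σ _ : Fin d, Fin d → Fin d)
      = ⟨a, f⟩ := by
  rw [anchor_update htree ex]
  have hupd : Function.update (Function.update f a a') a a = f := by
    rw [Function.update_idem, Function.update_eq_self_iff, htree.1]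
  rw [hupd]

/-- Lemma B: the weighted sum of tree weights equals the R-sum. -/
lemma lemB (M : Fin d → Fin d → ℝ) (a' : Fin d) :
    ∑ a, w M a * M a a' = ∑ h ∈ RSet a', ∏ b, M b (h b) := by
  have hrw : ∀ a : Fin d, w M a * M a a'
      = ∑ f ∈ treeSet a, (∏ b ∈ univ.erase a, M b (f b)) * M a a' := by
    intro a; rw [w, Finset.sum_mul]
  simp only [hrw]
  rw [← Finset.sum_sigma univ (fun a => treeSet a)
    (fun p => (∏ b ∈ univ.erase p.1, M b (p.2 b)) * M p.1 a')]
  refine Finset.sum_bij' (fun p _ => Function.update p.2 p.1 a')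
    (fun h hh => ⟨anchor a' h (ex_of_reaches (mem_RSet.mp hh)),
      Function.update h (anchor a' h (ex_of_reaches (mem_RSet.mp hh)))
        (anchor a' h (ex_of_reaches (mem_RSet.mp hh)))⟩) ?_ ?_ ?_ ?_ ?_
  · rintro ⟨a, f⟩ hp
    rw [Finset.mem_sigma] at hp
    obtain ⟨-, hpf⟩ := hp
    obtain ⟨hfa, hfr⟩ := mem_treeSet.mp hpf
    rw [mem_RSet]
    intro b
    dsimp only
    have hba : reaches (Function.update f a a') b a :=
      reaches_congr (fun b hb => (Function.update_of_ne hb _ _).symm) (hfr b)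
    exact reaches_trans hba ⟨1, by simp [Function.update_self]⟩
  · rintro h hh
    have hhr := mem_RSet.mp hh
    set σ := anchor a' h (ex_of_reaches hhr) with hσ
    rw [Finset.mem_sigma]
    refine ⟨Finset.mem_univ _, mem_treeSet.mpr ⟨Function.update_self _ _ _, fun b => ?_⟩⟩
    exact reaches_congr (fun b hb => (Function.update_of_ne hb _ _).symm)
      (reaches_anchor hhr _ b)
  · rintro ⟨a, f⟩ hp
    rw [Finset.mem_sigma] at hp
    obtain ⟨-, hpf⟩ := hp
    have htree : IsTree a f := mem_treeSet.mp hpf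
    exact roundtrip htree _
  · rintro h hh
    have hhr := mem_RSet.mp hh
    dsimp only
    rw [Function.update_idem, Function.update_eq_self_iff]
    exact (anchor_image (ex_of_reaches hhr)).symm
  · rintro ⟨a, f⟩ hp
    rw [Finset.mem_sigma] at hp
    obtain ⟨-, hpf⟩ := hp
    dsimp only
    rw [← Finset.mul_prod_erase univ _ (Finset.mem_univ a), Function.update_self, mul_comm]
    congr 1
    refine Finset.prod_congr rfl (fun b hb => ?_)
    rw [Function.update_of_ne (Finset.mem_erase.mp hb).1]

/-- the tree vector is a fixed point. -/
lemma w_fixed (M : Fin d → Fin d → ℝ) (hrow : ∀ a, ∑ c, M a c = 1) (a' : Fin d) :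
    ∑ a, w M a * M a a' = w M a' := by
  rw [lemB M a', ← lemA M a', hrow a', mul_one]

lemma w_pos (M : Fin d → Fin d → ℝ) (hpos : ∀ a c, 0 < M a c) (a : Fin d) :
    0 < w M a := by
  rw [w]
  refine Finset.sum_pos' (fun f _ => Finset.prod_nonneg fun b _ => (hpos b (f b)).le)
    ⟨(fun _ => a), mem_treeSet.mpr ⟨rfl, fun b => ⟨1, rfl⟩⟩,
      Finset.prod_pos fun b _ => hpos b a⟩

lemma strict_abs_sum {t : Fin d → ℝ} {i j : Fin d}
    (hpos : 0 < t i) (hneg : t j < 0) : |∑ a, t a| < ∑ a, |t a| := by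
  rw [abs_lt]
  constructor
  · have : ∑ a, -|t a| < ∑ a, t a :=
      Finset.sum_lt_sum (fun b _ => neg_abs_le _)
        ⟨i, Finset.mem_univ i, by rw [abs_of_pos hpos]; linarith⟩
    rw [Finset.sum_neg_distrib] at this
    linarith [this]
  · exact Finset.sum_lt_sum (fun b _ => le_abs_self _)
      ⟨j, Finset.mem_univ j, by rw [abs_of_neg hneg]; linarith⟩

/-- uniqueness of stationary distributions for positive stochastic matrices. -/
lemma stationary_unique (hd : 0 < d) (M : Fin d → Fin d → ℝ)
    (hpos : ∀ a c, 0 < M a c) (hrow : ∀ a, ∑ c, M a c = 1)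
    {x y : Fin d → ℝ} (hxs : ∑ a, x a = 1) (hys : ∑ a, y a = 1)
    (hx : ∀ a', ∑ a, x a * M a a' = x a') (hy : ∀ a', ∑ a, y a * M a a' = y a') :
    x = y := by
  by_contra hne
  set v : Fin d → ℝ := fun a => x a - y a with hv
  have hvfix : ∀ a', ∑ a, v a * M a a' = v a' := by
    intro a'
    simp only [hv, sub_mul, Finset.sum_sub_distrib, hx a', hy a']
  have hvsum : ∑ a, v a = 0 := by
    simp only [hv, Finset.sum_sub_distrib, hxs, hys, sub_self]
  have hvne : ∃ a, v a ≠ 0 := by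
    by_contra hall
    push_neg at hall
    exact hne (funext fun a => by have := hall a; simp only [hv] at this; linarith)
  obtain ⟨a₀, ha₀⟩ := hvne
  have hexpos : ∃ i, 0 < v i := by
    by_contra hall
    push_neg at hall
    have hz : ∀ a ∈ univ, -v a = 0 := by
      refine (Finset.sum_eq_zero_iff_of_nonneg (fun a _ => neg_nonneg.mpr (hall a))).mp ?_
      rw [Finset.sum_neg_distrib, hvsum, neg_zero]
    exact ha₀ (by have := hz a₀ (Finset.mem_univ a₀); linarith)
  have hexneg : ∃ j, v j < 0 := by
    by_contra hall
    push_neg at hall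
    exact ha₀ ((Finset.sum_eq_zero_iff_of_nonneg (fun a _ => hall a)).mp hvsum a₀
      (Finset.mem_univ a₀))
  obtain ⟨i, hi⟩ := hexpos
  obtain ⟨j, hj⟩ := hexneg
  have key : ∀ a', |v a'| < ∑ a, |v a| * M a a' := by
    intro a'
    rw [← hvfix a']
    calc |∑ a, v a * M a a'| < ∑ a, |v a * M a a'| :=
          strict_abs_sum (mul_pos hi (hpos i a')) (mul_neg_of_neg_of_pos hj (hpos j a'))
      _ = ∑ a, |v a| * M a a' := by
          refine Finset.sum_congr rfl fun a _ => ?_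
          rw [abs_mul, abs_of_pos (hpos a a')]
  have hlt : ∑ a', |v a'| < ∑ a', ∑ a, |v a| * M a a' :=
    Finset.sum_lt_sum_of_nonempty (Finset.univ_nonempty_iff.mpr (Fin.pos_iff_nonempty.mp hd))
      (fun a' _ => key a')
  rw [Finset.sum_comm] at hlt
  have hcol : ∑ a, ∑ a', |v a| * M a a' = ∑ a, |v a| := by
    refine Finset.sum_congr rfl fun a _ => ?_
    rw [← Finset.mul_sum, hrow a, mul_one]
  rw [hcol] at hlt
  exact lt_irrefl _ hlt


lemma stationary_eq_w (hd : 0 < d) (M : Fin d → Fin d → ℝ)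
    (hpos : ∀ a c, 0 < M a c) (hrow : ∀ a, ∑ c, M a c = 1)
    {x : Fin d → ℝ} (hxs : ∑ a, x a = 1)
    (hx : ∀ a', ∑ a, x a * M a a' = x a') :
    ∀ a, x a = w M a / (∑ b, w M b) := by
  have hW : 0 < ∑ b, w M b :=
    Finset.sum_pos (fun b _ => w_pos M hpos b)
      (Finset.univ_nonempty_iff.mpr (Fin.pos_iff_nonempty.mp hd))
  have hy : x = fun a => w M a / (∑ b, w M b) := by
    refine stationary_unique hd M hpos hrow hxs ?_ hx ?_
    · rw [← Finset.sum_div, div_self hW.ne']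
    · intro a'
      have : ∑ a, w M a / (∑ b, w M b) * M a a' = (∑ a, w M a * M a a') / (∑ b, w M b) := by
        rw [Finset.sum_div]
        exact Finset.sum_congr rfl fun a _ => by ring
      rw [this, w_fixed M hrow a']
  exact fun a => congrFun hy a

lemma one_sub_sum_le_prod {α : Type*} (s : Finset α) (f : α → ℝ)
    (h0 : ∀ i ∈ s, 0 ≤ f i) (h1 : ∀ i ∈ s, f i ≤ 1) :
    1 - ∑ i ∈ s, f i ≤ ∏ i ∈ s, (1 - f i) := by
  classical
  induction s using Finset.induction_on with
  | empty => simp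
  | @insert a s ha ih =>
    rw [Finset.sum_insert ha, Finset.prod_insert ha]
    have h0a : 0 ≤ f a := h0 a (Finset.mem_insert_self a s)
    have h1a : f a ≤ 1 := h1 a (Finset.mem_insert_self a s)
    have h0s : ∀ i ∈ s, 0 ≤ f i := fun i hi => h0 i (Finset.mem_insert_of_mem hi)
    have h1s : ∀ i ∈ s, f i ≤ 1 := fun i hi => h1 i (Finset.mem_insert_of_mem hi)
    have ihs := ih h0s h1s
    have hsn : 0 ≤ ∑ i ∈ s, f i := Finset.sum_nonneg h0s
    nlinarith [mul_le_mul_of_nonneg_left ihs (by linarith : (0:ℝ) ≤ 1 - f a),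
      mul_nonneg h0a hsn]

lemma l1_le (hd : 0 < d) (M M' : Fin d → Fin d → ℝ)
    (hMpos : ∀ a c, 0 < M a c) (hM'pos : ∀ a c, 0 < M' a c)
    (hMrow : ∀ a, ∑ c, M a c = 1) (hM'row : ∀ a, ∑ c, M' a c = 1)
    (ε : Fin d → ℝ) (hε0 : ∀ a, 0 ≤ ε a) (hεhalf : ∀ a, ε a ≤ 1/2)
    (hεsum : ∑ a, ε a ≤ 1/2)
    (hlow : ∀ a c, M a c * (1 - ε a) ≤ M' a c)
    (hhigh : ∀ a c, M' a c ≤ M a c * (1 + ε a))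
    (x x' : Fin d → ℝ)
    (hxs : ∑ a, x a = 1) (hx's : ∑ a, x' a = 1)
    (hx : ∀ a', ∑ a, x a * M a a' = x a')
    (hx' : ∀ a', ∑ a, x' a * M' a a' = x' a') :
    ∑ a, |x a - x' a| ≤ 8 * ∑ a, ε a := by
  have hne : (Finset.univ : Finset (Fin d)).Nonempty :=
    Finset.univ_nonempty_iff.mpr (Fin.pos_iff_nonempty.mp hd)
  set L := ∏ b, (1 - ε b) with hLdef
  set U := ∏ b, (1 + ε b) with hUdef
  have hLpos : 0 < L := Finset.prod_pos fun b _ => by linarith [hεhalf b]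
  have hUpos : 0 < U := Finset.prod_pos fun b _ => by linarith [hε0 b]
  have hL1 : L ≤ 1 := by
    rw [hLdef]
    exact Finset.prod_le_one (fun b _ => by linarith [hεhalf b]) (fun b _ => by linarith [hε0 b])
  have hU1 : 1 ≤ U := by
    rw [hUdef]
    have h := Finset.prod_le_prod (s := univ) (f := fun _ : Fin d => (1:ℝ))
      (g := fun b => 1 + ε b) (fun _ _ => zero_le_one) (fun b _ => by linarith [hε0 b])
    simpa using h
  have hUL : U * L ≤ 1 := by
    rw [hUdef, hLdef, ← Finset.prod_mul_distrib]
    exact Finset.prod_le_one (fun b _ => by nlinarith [hε0 b, hεhalf b])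
      (fun b _ => by nlinarith [hε0 b, hεhalf b])
  have hLge : 1 - ∑ a, ε a ≤ L := by
    rw [hLdef]
    exact one_sub_sum_le_prod _ _ (fun i _ => hε0 i) (fun i _ => by linarith [hεhalf i])
  -- tree weight comparison
  have hcompU : ∀ a, w M' a ≤ U * w M a := by
    intro a
    rw [w, w, Finset.mul_sum]
    refine Finset.sum_le_sum fun f _ => ?_
    have h1 : ∏ b ∈ univ.erase a, M' b (f b)
        ≤ ∏ b ∈ univ.erase a, (M b (f b) * (1 + ε b)) :=
      Finset.prod_le_prod (fun b _ => (hM'pos b (f b)).le) (fun b _ => hhigh b (f b))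
    have h2 : ∏ b ∈ univ.erase a, (M b (f b) * (1 + ε b))
        = (∏ b ∈ univ.erase a, (1 + ε b)) * ∏ b ∈ univ.erase a, M b (f b) := by
      rw [Finset.prod_mul_distrib]; ring
    have h3 : ∏ b ∈ univ.erase a, (1 + ε b) ≤ U := by
      rw [hUdef, ← Finset.mul_prod_erase univ _ (Finset.mem_univ a)]
      have hp : 0 ≤ ∏ b ∈ univ.erase a, (1 + ε b) :=
        Finset.prod_nonneg fun b _ => by linarith [hε0 b]
      nlinarith [hε0 a]
    have h4 : 0 ≤ ∏ b ∈ univ.erase a, M b (f b) :=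
      Finset.prod_nonneg fun b _ => (hMpos b (f b)).le
    calc ∏ b ∈ univ.erase a, M' b (f b)
        ≤ (∏ b ∈ univ.erase a, (1 + ε b)) * ∏ b ∈ univ.erase a, M b (f b) := by
          rw [← h2]; exact h1
      _ ≤ U * ∏ b ∈ univ.erase a, M b (f b) := mul_le_mul_of_nonneg_right h3 h4
  have hcompL : ∀ a, L * w M a ≤ w M' a := by
    intro a
    rw [w, w, Finset.mul_sum]
    refine Finset.sum_le_sum fun f _ => ?_
    have h1 : ∏ b ∈ univ.erase a, (M b (f b) * (1 - ε b))
        ≤ ∏ b ∈ univ.erase a, M' b (f b) :=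
      Finset.prod_le_prod (fun b _ => by nlinarith [hMpos b (f b), hεhalf b])
        (fun b _ => hlow b (f b))
    have h2 : ∏ b ∈ univ.erase a, (M b (f b) * (1 - ε b))
        = (∏ b ∈ univ.erase a, (1 - ε b)) * ∏ b ∈ univ.erase a, M b (f b) := by
      rw [Finset.prod_mul_distrib]; ring
    have h3 : L ≤ ∏ b ∈ univ.erase a, (1 - ε b) := by
      rw [hLdef, ← Finset.mul_prod_erase univ _ (Finset.mem_univ a)]
      have hp : 0 ≤ ∏ b ∈ univ.erase a, (1 - ε b) :=
        Finset.prod_nonneg fun b _ => by linarith [hεhalf b]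
      nlinarith [hε0 a, hεhalf a]
    have h4 : 0 ≤ ∏ b ∈ univ.erase a, M b (f b) :=
      Finset.prod_nonneg fun b _ => (hMpos b (f b)).le
    calc L * ∏ b ∈ univ.erase a, M b (f b)
        ≤ (∏ b ∈ univ.erase a, (1 - ε b)) * ∏ b ∈ univ.erase a, M b (f b) :=
          mul_le_mul_of_nonneg_right h3 h4
      _ = ∏ b ∈ univ.erase a, (M b (f b) * (1 - ε b)) := h2.symm
      _ ≤ ∏ b ∈ univ.erase a, M' b (f b) := h1
  set W := ∑ b, w M b with hWdef
  set W' := ∑ b, w M' b with hW'def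
  have hWpos : 0 < W := Finset.sum_pos (fun b _ => w_pos M hMpos b) hne
  have hW'pos : 0 < W' := Finset.sum_pos (fun b _ => w_pos M' hM'pos b) hne
  have hW'le : W' ≤ U * W := by
    rw [hW'def, hWdef, Finset.mul_sum]
    exact Finset.sum_le_sum fun b _ => hcompU b
  have hW'ge : L * W ≤ W' := by
    rw [hW'def, hWdef, Finset.mul_sum]
    exact Finset.sum_le_sum fun b _ => hcompL b
  have hxw : ∀ a, x a = w M a / W := by
    rw [hWdef]; exact stationary_eq_w hd M hMpos hMrow hxs hx
  have hx'w : ∀ a, x' a = w M' a / W' := by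
    rw [hW'def]; exact stationary_eq_w hd M' hM'pos hM'row hx's hx'
  have hwpos : ∀ a, 0 < w M a := fun a => w_pos M hMpos a
  have hw'pos : ∀ a, 0 < w M' a := fun a => w_pos M' hM'pos a
  clear_value L U W W'
  clear hLdef hUdef hWdef hW'def
  have habs : ∀ a, |x a - x' a| ≤ (U/L - 1) * x a := by
    intro a
    have hwa : 0 < w M a := hwpos a
    have hw'a : 0 < w M' a := hw'pos a
    have hx'ub : x' a ≤ (U / L) * x a := by
      rw [hx'w a, hxw a]
      have hstep : w M' a / W' ≤ (U * w M a) / (L * W) :=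
        div_le_div₀ (mul_nonneg hUpos.le hwa.le) (hcompU a) (mul_pos hLpos hWpos) hW'ge
      calc w M' a / W' ≤ (U * w M a) / (L * W) := hstep
        _ = (U / L) * (w M a / W) := by
            field_simp
    have hx'lb : (L / U) * x a ≤ x' a := by
      rw [hx'w a, hxw a]
      have hstep : (L * w M a) / (U * W) ≤ w M' a / W' :=
        div_le_div₀ hw'a.le (hcompL a) hW'pos hW'le
      calc (L / U) * (w M a / W) = (L * w M a) / (U * W) := by
            field_simp
        _ ≤ w M' a / W' := hstep
    have hxa0 : 0 ≤ x a := by rw [hxw a]; exact div_nonneg hwa.le hWpos.le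
    have hkey : 1 - L/U ≤ U/L - 1 := by
      have heq : U/L - 1 - (1 - L/U) = (U - L)^2 / (U*L) := by
        field_simp
      have hq : 0 ≤ (U - L)^2 / (U*L) := div_nonneg (sq_nonneg _) (mul_pos hUpos hLpos).le
      linarith [heq ▸ hq]
    rw [abs_sub_le_iff]
    constructor
    · nlinarith [hx'lb, hkey, hxa0]
    · nlinarith [hx'ub, hxa0]
  have hsum : ∑ a, |x a - x' a| ≤ U/L - 1 := by
    calc ∑ a, |x a - x' a| ≤ ∑ a, (U/L - 1) * x a := Finset.sum_le_sum fun a _ => habs a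
      _ = (U/L - 1) * ∑ a, x a := (Finset.mul_sum _ _ _).symm
      _ = U/L - 1 := by rw [hxs, mul_one]
  have hE0 : 0 ≤ ∑ a, ε a := Finset.sum_nonneg fun a _ => hε0 a
  have hfinal : U/L - 1 ≤ 8 * ∑ a, ε a := by
    clear hcompL hcompU hxw hx'w habs hx hx' hlow hhigh hxs hx's hsum hW'le hW'ge
    set E := ∑ a, ε a with hEdef
    clear_value E
    have hLE : 1 - E ≤ L := hLge
    have hE2 : E ≤ 1/2 := hεsum
    have hL2 : (1-E)^2 ≤ L^2 := by nlinarith [hLE, hLpos, hE2]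
    have h18 : (0:ℝ) ≤ 1 + 8*E := by linarith
    have hmul := mul_le_mul_of_nonneg_left hL2 h18
    have hLsq : 1 ≤ (1 + 8*E) * L^2 := by
      nlinarith [hmul, mul_nonneg hE0 (sq_nonneg (E - 1/2)),
        mul_le_mul_of_nonneg_left hE2 hE0]
    have hUb : U ≤ (1 + 8*E) * L := by nlinarith [hUL, hLsq, hLpos, mul_pos hLpos hLpos]
    rw [sub_le_iff_le_add, div_le_iff₀ hLpos]
    nlinarith [hUb, hLpos, hE0]
  linarith [hsum, hfinal]

end StatStab

/-- stability of stationary distributions of nearby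
    row-stochastic matrices (Lemma 4.2 / Lemma `l1norm`). -/
theorem stationary_l1_stability (d : ℕ) (hd : 0 < d)
    (M M' : Fin d → Fin d → ℝ)
    (hMpos : ∀ a a', 0 < M a a')
    (hM'nonneg : ∀ a a', 0 ≤ M' a a')
    (hMrow : ∀ a, ∑ a', M a a' = 1) (hM'row : ∀ a, ∑ a', M' a a' = 1)
    (hclose : ∑ a, (Finset.univ.sup' (Finset.univ_nonempty_iff.mpr (Fin.pos_iff_nonempty.mp hd))
        fun a' => |1 - M' a a' / M a a'|) ≤ 1 / 2)
    (x x' : Fin d → ℝ)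
    (hx0 : ∀ a, 0 ≤ x a) (hx'0 : ∀ a, 0 ≤ x' a)
    (hxs : ∑ a, x a = 1) (hx's : ∑ a, x' a = 1)
    (hx : ∀ a', ∑ a, x a * M a a' = x a')
    (hx' : ∀ a', ∑ a, x' a * M' a a' = x' a') :
    (∑ a, |x a - x' a|) ^ 2 ≤ 64 * d * ∑ a, ∑ a', ((M a a' - M' a a') / M a a') ^ 2 := by
  have hne : (Finset.univ : Finset (Fin d)).Nonempty :=
    Finset.univ_nonempty_iff.mpr (Fin.pos_iff_nonempty.mp hd)
  set ε : Fin d → ℝ := fun a => Finset.univ.sup'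
      (Finset.univ_nonempty_iff.mpr (Fin.pos_iff_nonempty.mp hd))
      (fun a' => |1 - M' a a' / M a a'|) with hεdef
  have hεsum : ∑ a, ε a ≤ 1/2 := hclose
  have hbound : ∀ a c, |1 - M' a c / M a c| ≤ ε a := by
    intro a c
    simp only [hεdef]
    exact Finset.le_sup' (fun a' => |1 - M' a a' / M a a'|) (Finset.mem_univ c)
  have hε0 : ∀ a, 0 ≤ ε a := fun a => le_trans (abs_nonneg _) (hbound a a)
  have hεhalf : ∀ a, ε a ≤ 1/2 := fun a =>
    le_trans (Finset.single_le_sum (fun b _ => hε0 b) (Finset.mem_univ a)) hεsum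
  have hlow : ∀ a c, M a c * (1 - ε a) ≤ M' a c := by
    intro a c
    have h := (abs_le.mp (hbound a c)).2
    have h2 : 1 - ε a ≤ M' a c / M a c := by linarith
    rw [le_div_iff₀ (hMpos a c)] at h2
    linarith [h2]
  have hhigh : ∀ a c, M' a c ≤ M a c * (1 + ε a) := by
    intro a c
    have h := (abs_le.mp (hbound a c)).1
    have h2 : M' a c / M a c ≤ 1 + ε a := by linarith
    rw [div_le_iff₀ (hMpos a c)] at h2
    linarith [h2]
  have hM'pos : ∀ a c, 0 < M' a c := by
    intro a c
    have := hlow a c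
    nlinarith [hMpos a c, hεhalf a]
  have hl1 : ∑ a, |x a - x' a| ≤ 8 * ∑ a, ε a :=
    StatStab.l1_le hd M M' hMpos hM'pos hMrow hM'row ε hε0 hεhalf hεsum hlow hhigh
      x x' hxs hx's hx hx'
  have hnn : 0 ≤ ∑ a, |x a - x' a| := Finset.sum_nonneg fun a _ => abs_nonneg _
  have hE0 : 0 ≤ ∑ a, ε a := Finset.sum_nonneg fun a _ => hε0 a
  have hsq : (∑ a, |x a - x' a|)^2 ≤ (8 * ∑ a, ε a)^2 := by
    have := pow_le_pow_left₀ hnn hl1 2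
    exact this
  have hCS : (∑ a, ε a)^2 ≤ (d : ℝ) * ∑ a, (ε a)^2 := by
    have h := Finset.sum_mul_sq_le_sq_mul_sq Finset.univ (fun _ => (1:ℝ)) ε
    simpa [Finset.card_univ] using h
  have hterm : ∀ a, (ε a)^2 ≤ ∑ a', ((M a a' - M' a a') / M a a')^2 := by
    intro a
    obtain ⟨c, hc, hcs⟩ := Finset.exists_mem_eq_sup' hne (fun a' => |1 - M' a a' / M a a'|)
    have hεa : ε a = |1 - M' a c / M a c| := by rw [hεdef]; exact hcs
    have heq : (1 - M' a c / M a c) = (M a c - M' a c) / M a c := by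
      rw [sub_div, div_self (hMpos a c).ne']
    calc (ε a)^2 = ((M a c - M' a c) / M a c)^2 := by rw [hεa, sq_abs, heq]
      _ ≤ ∑ a', ((M a a' - M' a a') / M a a')^2 :=
        Finset.single_le_sum (f := fun a' => ((M a a' - M' a a') / M a a')^2)
          (fun a' _ => sq_nonneg _) (Finset.mem_univ c)
  have hsum2 : ∑ a, (ε a)^2 ≤ ∑ a, ∑ a', ((M a a' - M' a a') / M a a')^2 :=
    Finset.sum_le_sum fun a _ => hterm a
  have hd' : (0:ℝ) ≤ (d:ℝ) := Nat.cast_nonneg d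
  calc (∑ a, |x a - x' a|)^2 ≤ (8 * ∑ a, ε a)^2 := hsq
    _ = 64 * (∑ a, ε a)^2 := by ring
    _ ≤ 64 * ((d : ℝ) * ∑ a, (ε a)^2) := by linarith [hCS]
    _ = 64 * (d : ℝ) * ∑ a, (ε a)^2 := by ring
    _ ≤ 64 * (d : ℝ) * ∑ a, ∑ a', ((M a a' - M' a a') / M a a')^2 := by
        have h64 : (0:ℝ) ≤ 64 * (d:ℝ) := by positivity
        exact mul_le_mul_of_nonneg_left hsum2 h64
end
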